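/- Let W₁ = x₁³+x₂³+x₃³−3X₁X₂X₃ and W₂ = X₁³+X₂³+X₃³−3x₁x₂x₃. A diagonal transformation of ℂ⁶ given by (x₁,x₂,x₃,X₁,X₂,X₃) ↦ (t₁x₁,t₂x₂,t₃x₃,T₁X₁,T₂X₂,T₃X₃) with tᵢ,Tᵢ ∈ ℂ* satisfies W₁(t·x,T·X) = β₁·W₁(x,X) for some β₁ ∈ ℂ* (identically in x,X) if and only if t₁³ = t₂³ = t₃³ = T₁T₂T₃, and it satisfies W₂(t·x,T·X) = β₂·W₂(x,X) for some β₂ ∈ ℂ* if and only if T₁³ = T₂³ = T₃³ = t₁t₂t₃; in these cases β₁ = t₁³ and β₂ = T₁³. -/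
import Mathlib


open MvPolynomial

/-- `W₁ = x₁³ + x₂³ + x₃³ − 3X₁X₂X₃`, with variables `x₁,x₂,x₃,X₁,X₂,X₃` indexed by `0,…,5`. -/
noncomputable def LT_W₁ : MvPolynomial (Fin 6) ℂ :=
  X 0 ^ 3 + X 1 ^ 3 + X 2 ^ 3 - 3 * (X 3 * X 4 * X 5)

/-- `W₂ = X₁³ + X₂³ + X₃³ − 3x₁x₂x₃`. -/
noncomputable def LT_W₂ : MvPolynomial (Fin 6) ℂ :=
  X 3 ^ 3 + X 4 ^ 3 + X 5 ^ 3 - 3 * (X 0 * X 1 * X 2)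

lemma evalW1 (z : Fin 6 → ℂ) :
    eval z LT_W₁ = z 0 ^ 3 + z 1 ^ 3 + z 2 ^ 3 - 3 * (z 3 * z 4 * z 5) := by
  simp [LT_W₁]

lemma evalW2 (z : Fin 6 → ℂ) :
    eval z LT_W₂ = z 3 ^ 3 + z 4 ^ 3 + z 5 ^ 3 - 3 * (z 0 * z 1 * z 2) := by
  simp [LT_W₂]

lemma fwd1 (t : Fin 6 → ℂˣ) (β : ℂˣ)
    (h : ∀ z : Fin 6 → ℂ, eval (fun i => (t i : ℂ) * z i) LT_W₁ = (β : ℂ) * eval z LT_W₁) :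
    ((t 0 : ℂ) ^ 3 = β ∧ (t 1 : ℂ) ^ 3 = β) ∧
      (t 2 : ℂ) ^ 3 = β ∧ (t 3 : ℂ) * t 4 * t 5 = β := by
  have h0 := h (fun i => if i = 0 then 1 else 0)
  have h1 := h (fun i => if i = 1 then 1 else 0)
  have h2 := h (fun i => if i = 2 then 1 else 0)
  have h3 := h (fun i => if 3 ≤ i then 1 else 0)
  simp (config := { decide := true }) [evalW1] at h0 h1 h2 h3
  refine ⟨⟨h0, h1⟩, h2, ?_⟩
  linear_combination h3 / 3

lemma fwd2 (t : Fin 6 → ℂˣ) (β : ℂˣ)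
    (h : ∀ z : Fin 6 → ℂ, eval (fun i => (t i : ℂ) * z i) LT_W₂ = (β : ℂ) * eval z LT_W₂) :
    ((t 3 : ℂ) ^ 3 = β ∧ (t 4 : ℂ) ^ 3 = β) ∧
      (t 5 : ℂ) ^ 3 = β ∧ (t 0 : ℂ) * t 1 * t 2 = β := by
  have h0 := h (fun i => if i = 3 then 1 else 0)
  have h1 := h (fun i => if i = 4 then 1 else 0)
  have h2 := h (fun i => if i = 5 then 1 else 0)
  have h3 := h (fun i => if i ≤ 2 then 1 else 0)
  simp (config := { decide := true }) [evalW2] at h0 h1 h2 h3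
  refine ⟨⟨h0, h1⟩, h2, ?_⟩
  linear_combination h3 / 3

theorem stmt12 (t : Fin 6 → ℂˣ) :
    ((∃ β₁ : ℂˣ, ∀ z : Fin 6 → ℂ,
        eval (fun i => (t i : ℂ) * z i) LT_W₁ = (β₁ : ℂ) * eval z LT_W₁) ↔
      (t 0 ^ 3 = t 1 ^ 3 ∧ t 1 ^ 3 = t 2 ^ 3 ∧ t 2 ^ 3 = t 3 * t 4 * t 5)) ∧
    ((∃ β₂ : ℂˣ, ∀ z : Fin 6 → ℂ,
        eval (fun i => (t i : ℂ) * z i) LT_W₂ = (β₂ : ℂ) * eval z LT_W₂) ↔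
      (t 3 ^ 3 = t 4 ^ 3 ∧ t 4 ^ 3 = t 5 ^ 3 ∧ t 5 ^ 3 = t 0 * t 1 * t 2)) ∧
    (∀ β₁ : ℂˣ, (∀ z : Fin 6 → ℂ,
        eval (fun i => (t i : ℂ) * z i) LT_W₁ = (β₁ : ℂ) * eval z LT_W₁) →
      β₁ = t 0 ^ 3) ∧
    (∀ β₂ : ℂˣ, (∀ z : Fin 6 → ℂ,
        eval (fun i => (t i : ℂ) * z i) LT_W₂ = (β₂ : ℂ) * eval z LT_W₂) →
      β₂ = t 3 ^ 3) := by
  refine ⟨⟨?_, ?_⟩, ⟨?_, ?_⟩, ?_, ?_⟩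
  · rintro ⟨β, h⟩
    obtain ⟨⟨h0, h1⟩, h2, h3⟩ := fwd1 t β h
    refine ⟨Units.ext ?_, Units.ext ?_, Units.ext ?_⟩ <;> push_cast
    · exact h0.trans h1.symm
    · exact h1.trans h2.symm
    · exact h2.trans h3.symm
  · rintro ⟨h01, h12, h2p⟩
    refine ⟨t 0 ^ 3, fun z => ?_⟩
    have c1 : (t 1 : ℂ) ^ 3 = (t 0 : ℂ) ^ 3 := by
      have := congrArg Units.val h01; push_cast at this; exact this.symm
    have c2 : (t 2 : ℂ) ^ 3 = (t 0 : ℂ) ^ 3 := by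
      have := congrArg Units.val (h01.trans h12); push_cast at this; exact this.symm
    have c3 : (t 3 : ℂ) * t 4 * t 5 = (t 0 : ℂ) ^ 3 := by
      have := congrArg Units.val ((h01.trans h12).trans h2p); push_cast at this
      exact this.symm
    simp only [evalW1]
    push_cast
    linear_combination z 1 ^ 3 * c1 + z 2 ^ 3 * c2 - 3 * (z 3 * z 4 * z 5) * c3
  · rintro ⟨β, h⟩
    obtain ⟨⟨h0, h1⟩, h2, h3⟩ := fwd2 t β h
    refine ⟨Units.ext ?_, Units.ext ?_, Units.ext ?_⟩ <;> push_cast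
    · exact h0.trans h1.symm
    · exact h1.trans h2.symm
    · exact h2.trans h3.symm
  · rintro ⟨h01, h12, h2p⟩
    refine ⟨t 3 ^ 3, fun z => ?_⟩
    have c1 : (t 4 : ℂ) ^ 3 = (t 3 : ℂ) ^ 3 := by
      have := congrArg Units.val h01; push_cast at this; exact this.symm
    have c2 : (t 5 : ℂ) ^ 3 = (t 3 : ℂ) ^ 3 := by
      have := congrArg Units.val (h01.trans h12); push_cast at this; exact this.symm
    have c3 : (t 0 : ℂ) * t 1 * t 2 = (t 3 : ℂ) ^ 3 := by
      have := congrArg Units.val ((h01.trans h12).trans h2p); push_cast at this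
      exact this.symm
    simp only [evalW2]
    push_cast
    linear_combination z 4 ^ 3 * c1 + z 5 ^ 3 * c2 - 3 * (z 0 * z 1 * z 2) * c3
  · intro β h
    obtain ⟨⟨h0, _⟩, _⟩ := fwd1 t β h
    refine (Units.ext ?_).symm
    push_cast
    exact h0
  · intro β h
    obtain ⟨⟨h0, _⟩, _⟩ := fwd2 t β h
    refine (Units.ext ?_).symm
    push_cast
    exact h0
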